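/- On S³ ⊂ ℂ² with positive weights a1, a2, the Lie bracket of the Reeb field ξ_a(z) = (i a1 z1, i a2 z2) with Z₁(z) = σ(z)^{-1}(−i|z₂|²z₁, i|z₁|²z₂) vanishes: [ξ_a, Z₁] = 0, where σ(z) = a1|z₁|² + a2|z₂|². -/

import Mathlib

/-!
The Reeb field `ξ_a` generates the torus flow `t ↦ (e^{i a1 t} z₁, e^{i a2 t} z₂)`. This flow
preserves `|z₁|²` and `|z₂|²`, so it commutes with `Z₁`; differentiating `Z₁ ∘ Φₜ = Φₜ ∘ Z₁` at
`t = 0` gives `DZ₁ · ξ_a = ξ_a ∘ Z₁`, which is `Dξ_a · Z₁` because `ξ_a` is linear.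
-/

open Complex

@[fun_prop]
theorem Complex.differentiable_normSq : Differentiable ℝ normSq := by
  simp only [funext normSq_apply]
  fun_prop

noncomputable section

def reebFlow (a1 a2 t : ℝ) (z : ℂ × ℂ) : ℂ × ℂ :=
  (exp (↑(a1 * t) * I) * z.1, exp (↑(a2 * t) * I) * z.2)

def reebField (a1 a2 : ℝ) : ℂ × ℂ →L[ℝ] ℂ × ℂ :=
  ((I * a1) • ContinuousLinearMap.fst ℝ ℂ ℂ).prod ((I * a2) • ContinuousLinearMap.snd ℝ ℂ ℂ)

def fieldZ1 (a1 a2 : ℝ) (z : ℂ × ℂ) : ℂ × ℂ :=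
  ((a1 * normSq z.1 + a2 * normSq z.2)⁻¹ : ℝ) •
    ((-I * (normSq z.2 : ℂ) * z.1, I * (normSq z.1 : ℂ) * z.2) : ℂ × ℂ)

end

theorem reebFlow_zero (a1 a2 : ℝ) (z : ℂ × ℂ) : reebFlow a1 a2 0 z = z := by
  simp [reebFlow]

theorem hasDerivAt_reebFlow (a1 a2 : ℝ) (z : ℂ × ℂ) :
    HasDerivAt (fun t => reebFlow a1 a2 t z) (reebField a1 a2 z) 0 := by
  have h (a : ℝ) (w : ℂ) : HasDerivAt (fun t : ℝ => exp (↑(a * t) * I) * w) (I * a * w) 0 := by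
    have := (((hasDerivAt_id (0 : ℝ)).const_mul a).ofReal_comp.mul_const I).cexp.mul_const w
    simpa [mul_comm, mul_left_comm, mul_assoc] using this
  exact (h a1 z.1).prodMk (h a2 z.2)

theorem normSq_exp_ofReal_mul_I_mul (θ : ℝ) (w : ℂ) : normSq (exp (θ * I) * w) = normSq w := by
  rw [normSq_mul, normSq_eq_norm_sq (exp _), norm_exp_ofReal_mul_I, one_pow, one_mul]

theorem fderiv_apply_reebField_of_commute {F : ℂ × ℂ → ℂ × ℂ} {a1 a2 : ℝ} {z : ℂ × ℂ}
    (hF : DifferentiableAt ℝ F z) (hcomm : ∀ t, F (reebFlow a1 a2 t z) = reebFlow a1 a2 t (F z)) :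
    fderiv ℝ F z (reebField a1 a2 z) = reebField a1 a2 (F z) := by
  have hchain :
      HasDerivAt (fun t => F (reebFlow a1 a2 t z)) (fderiv ℝ F z (reebField a1 a2 z)) 0 := by
    rw [← reebFlow_zero a1 a2 z] at hF
    have := hF.hasFDerivAt.comp_hasDerivAt 0 (hasDerivAt_reebFlow a1 a2 z)
    rwa [reebFlow_zero] at this
  simp only [hcomm] at hchain
  exact hchain.unique (hasDerivAt_reebFlow a1 a2 (F z))

theorem fieldZ1_reebFlow (a1 a2 t : ℝ) (z : ℂ × ℂ) :
    fieldZ1 a1 a2 (reebFlow a1 a2 t z) = reebFlow a1 a2 t (fieldZ1 a1 a2 z) := by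
  simp only [fieldZ1, reebFlow, normSq_exp_ofReal_mul_I_mul, Prod.smul_mk, Prod.mk.injEq]
  constructor <;> simp only [Complex.real_smul] <;> ring

theorem differentiableAt_fieldZ1 {a1 a2 : ℝ} {z : ℂ × ℂ}
    (hσ : a1 * normSq z.1 + a2 * normSq z.2 ≠ 0) : DifferentiableAt ℝ (fieldZ1 a1 a2) z := by
  unfold fieldZ1
  fun_prop (disch := exact hσ)

theorem weightedNormSq_pos {a1 a2 : ℝ} (h1 : 0 < a1) (h2 : 0 < a2) {z : ℂ × ℂ}
    (hz : normSq z.1 + normSq z.2 = 1) : 0 < a1 * normSq z.1 + a2 * normSq z.2 :=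
  calc (0 : ℝ) < min a1 a2 := lt_min h1 h2
    _ = min a1 a2 * normSq z.1 + min a1 a2 * normSq z.2 := by rw [← mul_add, hz, mul_one]
    _ ≤ a1 * normSq z.1 + a2 * normSq z.2 := by
      gcongr
      exacts [normSq_nonneg _, min_le_left a1 a2, normSq_nonneg _, min_le_right a1 a2]

/-- On `S³ ⊂ ℂ²`, the Lie bracket `[ξ_a, Z₁] = D Z₁ · ξ_a − D ξ_a · Z₁` of the Reeb
field `ξ_a(z) = (i a1 z₁, i a2 z₂)` with
`Z₁(z) = σ(z)⁻¹ (−i|z₂|² z₁, i|z₁|² z₂)`, `σ(z) = a1|z₁|² + a2|z₂|²`,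
vanishes at every point of the unit sphere. -/
theorem bracket_reeb_Z1_vanishes (a1 a2 : ℝ) (h1 : 0 < a1) (h2 : 0 < a2) :
    let ξ : ℂ × ℂ → ℂ × ℂ := fun z => (Complex.I * (a1 : ℂ) * z.1, Complex.I * (a2 : ℂ) * z.2)
    let Z1 : ℂ × ℂ → ℂ × ℂ := fun z =>
      ((a1 * Complex.normSq z.1 + a2 * Complex.normSq z.2)⁻¹ : ℝ) •
        ((-Complex.I * (Complex.normSq z.2 : ℂ) * z.1,
          Complex.I * (Complex.normSq z.1 : ℂ) * z.2) : ℂ × ℂ)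
    ∀ z : ℂ × ℂ, Complex.normSq z.1 + Complex.normSq z.2 = 1 →
      fderiv ℝ Z1 z (ξ z) - fderiv ℝ ξ z (Z1 z) = 0 := by
  intro ξ Z1 z hz
  change fderiv ℝ (fieldZ1 a1 a2) z (reebField a1 a2 z)
    - fderiv ℝ (reebField a1 a2) z (fieldZ1 a1 a2 z) = 0
  have hZ1 := differentiableAt_fieldZ1 (weightedNormSq_pos h1 h2 hz).ne'
  rw [fderiv_apply_reebField_of_commute hZ1 (fieldZ1_reebFlow a1 a2 · z),
    ContinuousLinearMap.fderiv, sub_self]
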